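/- Let δ ≠ id be a permutation and suppose π = δ t_{ab} with ℓ(π) = ℓ(δ) + 1, b > d₂(δ), and a ≤ d₁(δ). Then π has no descent greater than d₂(δ); that is, d₂(π) ≤ d₂(δ). -/

import Mathlib

/-- A permutation of the positive integers, modeled as a permutation of `ℕ`
fixing `0` (and, separately assumed, all but finitely many points). -/
def FinPerm (w : Equiv.Perm ℕ) : Prop :=
  w 0 = 0 ∧ {i : ℕ | w i ≠ i}.Finite

/-- The length `ℓ(w)`: the number of inversions, i.e. pairs `i < j` with `w i > w j`. -/
noncomputable def len (w : Equiv.Perm ℕ) : ℕ :=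
  {p : ℕ × ℕ | p.1 < p.2 ∧ w p.2 < w p.1}.ncard

/-- The set of descents: positions `i ≥ 1` with `w i > w (i+1)`. -/
def descents (w : Equiv.Perm ℕ) : Set ℕ :=
  {i : ℕ | 0 < i ∧ w (i + 1) < w i}

/-- `d₁(w)`: the first (smallest) descent of `w`. -/
noncomputable def d1 (w : Equiv.Perm ℕ) : ℕ := sInf (descents w)

/-- `d₂(w)`: the last (largest) descent of `w`. -/
noncomputable def d2 (w : Equiv.Perm ℕ) : ℕ := sSup (descents w)

/-- `kCover k ρ π` means `ρ ⋖_k π`:  `π = ρ t_{a b}` for some positive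
`a ≤ k < b`, with `ℓ(π) = ℓ(ρ) + 1`. -/
def kCover (k : ℕ) (ρ π : Equiv.Perm ℕ) : Prop :=
  ∃ a b : ℕ, 0 < a ∧ a ≤ k ∧ k < b ∧ π = ρ * Equiv.swap a b ∧ len π = len ρ + 1

/-!
If `len (δ * swap a b) = len δ + 1`, then `δ a < δ b` and no `δ c` with `a < c < b` lies between
`δ a` and `δ b`: otherwise the inversions of the shorter of `δ` and `δ * swap a b` would inject into
those of the longer one missing one, respectively three, pairs. Beyond `d₂(δ)` the permutation `δ`
increases, and `π` differs from `δ` there only at `b`, where it takes the value `δ a`; the two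
facts rule out a descent of `π` at `b - 1` and at `b`.
-/

open Equiv

def inversions (w : Perm ℕ) : Set (ℕ × ℕ) :=
  {p | p.1 < p.2 ∧ w p.2 < w p.1}

lemma len_eq_ncard_inversions (w : Perm ℕ) : len w = (inversions w).ncard := rfl

lemma mem_inversions_swap {a b : ℕ} (hab : a < b) {p : ℕ × ℕ} :
    p ∈ inversions (swap a b) ↔ (p.1 = a ∧ a < p.2 ∧ p.2 ≤ b) ∨ (a ≤ p.1 ∧ p.1 < b ∧ p.2 = b) := by
  simp only [inversions, Set.mem_ofPred_eq, swap_apply_def]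
  split_ifs <;> omega

lemma inversions_swap_finite {a b : ℕ} (hab : a < b) : (inversions (swap a b)).Finite :=
  ((Set.finite_Icc a b).prod (Set.finite_Icc a b)).subset fun p hp => by
    rw [mem_inversions_swap hab] at hp
    simp only [Set.mem_prod, Set.mem_Icc]
    omega

lemma inversions_mul_subset (w σ : Perm ℕ) :
    inversions (w * σ) ⊆ Prod.map σ σ ⁻¹' inversions w ∪ inversions σ := by
  rintro ⟨i, j⟩ ⟨hij, hwσ⟩
  by_cases hσ : σ j < σ i
  · exact Or.inr ⟨hij, hσ⟩
  · have : σ i ≠ σ j := σ.injective.ne hij.ne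
    exact Or.inl ⟨show σ i < σ j by omega, hwσ⟩

lemma inversions_mul_finite {w σ : Perm ℕ} (hw : (inversions w).Finite)
    (hσ : (inversions σ).Finite) : (inversions (w * σ)).Finite :=
  ((hw.preimage (Prod.map_injective.mpr ⟨σ.injective, σ.injective⟩).injOn).union hσ).subset
    (inversions_mul_subset w σ)

lemma inversions_finite_of_mul_swap {w : Perm ℕ} {a b : ℕ} (hab : a < b)
    (h : (inversions (w * swap a b)).Finite) : (inversions w).Finite := by
  simpa [mul_assoc] using inversions_mul_finite h (inversions_swap_finite hab)

lemma mem_inversions_mul_swap_of_mem_inter {w : Perm ℕ} {a b : ℕ} (hab : a < b)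
    (hw : w a < w b) {p : ℕ × ℕ} (hp : p ∈ inversions w ∩ inversions (swap a b)) :
    p ∈ inversions (w * swap a b) := by
  obtain ⟨i, j⟩ := p
  obtain ⟨⟨hij, hwp⟩, hτp⟩ := hp
  rw [mem_inversions_swap hab] at hτp
  dsimp only at hij hwp hτp
  refine ⟨hij, ?_⟩
  rw [Perm.mul_apply, Perm.mul_apply]
  rcases hτp with ⟨rfl, -, hjb⟩ | ⟨hai, hib, rfl⟩
  · rw [swap_apply_left]
    rcases hjb.lt_or_eq with hjb | rfl
    · rw [swap_apply_of_ne_of_ne hij.ne' hjb.ne]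
      omega
    · rwa [swap_apply_right]
  · have hia : i ≠ a := by
      rintro rfl
      omega
    rw [swap_apply_right, swap_apply_of_ne_of_ne hia hib.ne]
    omega

lemma prodMap_swap_notMem_inversions_swap {a b : ℕ} {p : ℕ × ℕ} (hp : p.1 < p.2) :
    Prod.map (swap a b) (swap a b) p ∉ inversions (swap a b) := by
  rintro ⟨-, h⟩
  simp only [Prod.map_fst, Prod.map_snd, swap_apply_self] at h
  omega

/-- When `w a < w b`, the map fixing the pairs inverted by `swap a b` and moving the other pairs
by `swap a b` sends the inversions of `w`, together with `E`, injectively into the inversions of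
`w * swap a b`. -/
lemma len_add_ncard_le_len_mul_swap {w : Perm ℕ} {a b : ℕ} (hab : a < b) (hw : w a < w b)
    (hfin : (inversions (w * swap a b)).Finite) {E : Set (ℕ × ℕ)}
    (hE : E ⊆ (inversions (w * swap a b) ∩ inversions (swap a b)) \ inversions w) :
    len w + E.ncard ≤ len (w * swap a b) := by
  classical
  set τ := swap a b with hτ
  have hw_fin : (inversions w).Finite := inversions_finite_of_mul_swap hab hfin
  have hdisj : Disjoint (inversions w) E := Set.disjoint_right.mpr fun p hp => (hE hp).2
  have hlt : ∀ p ∈ inversions w ∪ E, p.1 < p.2 := by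
    rintro p (hp | hp)
    exacts [hp.1, (hE hp).1.2.1]
  rw [len_eq_ncard_inversions, len_eq_ncard_inversions,
    ← Set.ncard_union_eq hdisj hw_fin (hfin.subset fun p hp => (hE hp).1.1)]
  refine Set.ncard_le_ncard_of_injOn (fun p => if p ∈ inversions τ then p else Prod.map τ τ p)
    ?_ ?_ hfin
  · rintro p (hp | hp)
    · by_cases hpτ : p ∈ inversions τ
      · rw [if_pos hpτ]
        exact mem_inversions_mul_swap_of_mem_inter hab hw ⟨hp, hpτ⟩
      · rw [if_neg hpτ]
        have : τ p.1 ≠ τ p.2 := τ.injective.ne hp.1.ne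
        refine ⟨?_, ?_⟩
        · simp only [inversions, Set.mem_ofPred_eq, not_and, not_lt] at hpτ
          exact lt_of_le_of_ne (hpτ hp.1) this
        · simpa [hτ] using hp.2
    · rw [if_pos (hE hp).1.2]
      exact (hE hp).1.1
  · intro p hp q hq hpq
    by_cases hpτ : p ∈ inversions τ <;> by_cases hqτ : q ∈ inversions τ <;>
      simp only [hpτ, hqτ, if_true, if_false] at hpq
    · exact hpq
    · exact absurd (hpq ▸ hpτ) (prodMap_swap_notMem_inversions_swap (hlt q hq))
    · exact absurd (hpq ▸ hqτ) (prodMap_swap_notMem_inversions_swap (hlt p hp))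
    · exact (Prod.map_injective.mpr ⟨τ.injective, τ.injective⟩) hpq

lemma inversions_finite_of_len_eq_succ {w v : Perm ℕ} (h : len w = len v + 1) :
    (inversions w).Finite :=
  Set.finite_of_ncard_ne_zero (by rw [← len_eq_ncard_inversions, h]; omega)

lemma lt_of_len_mul_swap_eq_succ {w : Perm ℕ} {a b : ℕ} (hab : a < b)
    (h : len (w * swap a b) = len w + 1) : w a < w b := by
  by_contra! hba
  replace hba : w b < w a := hba.lt_of_ne (w.injective.ne hab.ne')
  set π := w * swap a b
  have hπ : π a < π b := by simpa [π] using hba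
  have hπw : π * swap a b = w := by simp [π, mul_assoc]
  have hfin : (inversions (π * swap a b)).Finite :=
    hπw ▸ inversions_finite_of_mul_swap hab (inversions_finite_of_len_eq_succ h)
  have := len_add_ncard_le_len_mul_swap hab hπ hfin (E := {(a, b)}) <| by
    rintro _ rfl
    rw [hπw]
    exact ⟨⟨⟨hab, hba⟩, (mem_inversions_swap hab).mpr (Or.inl ⟨rfl, hab, le_rfl⟩)⟩,
      fun hinv => hinv.2.not_gt hπ⟩
  rw [hπw, Set.ncard_singleton] at this
  omega

lemma not_between_of_len_mul_swap_eq_succ {w : Perm ℕ} {a b c : ℕ} (hac : a < c) (hcb : c < b)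
    (h : len (w * swap a b) = len w + 1) : ¬ (w a < w c ∧ w c < w b) := by
  rintro ⟨hwac, hwcb⟩
  have hab := hac.trans hcb
  have hτc : swap a b c = c := swap_apply_of_ne_of_ne hac.ne' hcb.ne
  have := len_add_ncard_le_len_mul_swap hab (hwac.trans hwcb) (inversions_finite_of_len_eq_succ h)
    (E := {(a, b), (a, c), (c, b)}) <| by
      rintro p (rfl | rfl | rfl) <;>
        refine ⟨⟨⟨?_, ?_⟩, (mem_inversions_swap hab).mpr (by omega)⟩, fun ⟨_, hinv⟩ => ?_⟩ <;>
        simp only [Perm.mul_apply, swap_apply_left, swap_apply_right, hτc] at * <;>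
        omega
  have hcard : ({(a, b), (a, c), (c, b)} : Set (ℕ × ℕ)).ncard = 3 :=
    Set.ncard_eq_three.mpr ⟨_, _, _, by simp; omega, by simp; omega, by simp; omega, rfl⟩
  omega

lemma bddAbove_descents {w : Perm ℕ} (h : (inversions w).Finite) : BddAbove (descents w) :=
  (h.image Prod.fst).bddAbove.mono fun i hi =>
    Set.mem_image_of_mem Prod.fst (show (i, i + 1) ∈ inversions w from ⟨i.lt_succ_self, hi.2⟩)

lemma lt_succ_of_d2_lt {w : Perm ℕ} (hbdd : BddAbove (descents w)) {i : ℕ} (hi : d2 w < i) :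
    w i < w (i + 1) := by
  refine (not_lt.mp fun hdesc => ?_).lt_of_ne (w.injective.ne i.lt_succ_self.ne)
  exact hi.not_ge (le_csSup hbdd ⟨by omega, hdesc⟩)

lemma le_d2_of_mem_descents_mul_swap {w : Perm ℕ} {a b : ℕ} (hbdd : BddAbove (descents w))
    (ha : a ≤ d2 w) (hb : d2 w < b) (hwab : w a < w b)
    (hbetween : ∀ c, a < c → c < b → ¬ (w a < w c ∧ w c < w b)) :
    ∀ i ∈ descents (w * swap a b), i ≤ d2 w := by
  rintro i ⟨-, hdesc⟩
  by_contra! hi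
  rw [Perm.mul_apply, Perm.mul_apply] at hdesc
  rcases lt_trichotomy (i + 1) b with hib | hib | hib
  · rw [swap_apply_of_ne_of_ne (by omega) hib.ne, swap_apply_of_ne_of_ne (by omega) (by omega)]
      at hdesc
    exact hdesc.not_gt (lt_succ_of_d2_lt hbdd hi)
  · rw [hib, swap_apply_right, swap_apply_of_ne_of_ne (by omega) (by omega)] at hdesc
    exact hbetween i (by omega) (by omega) ⟨hdesc, hib ▸ lt_succ_of_d2_lt hbdd hi⟩
  · rcases (Nat.lt_succ_iff.mp hib).lt_or_eq with hib | rfl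
    · rw [swap_apply_of_ne_of_ne (by omega) (by omega),
        swap_apply_of_ne_of_ne (by omega) (by omega)] at hdesc
      exact hdesc.not_gt (lt_succ_of_d2_lt hbdd hi)
    · rw [swap_apply_right, swap_apply_of_ne_of_ne (by omega) (by omega)] at hdesc
      exact hdesc.not_gt (hwab.trans (lt_succ_of_d2_lt hbdd hb))

theorem stmt12_general (δ : Equiv.Perm ℕ)
    (π : Equiv.Perm ℕ) (a b : ℕ) (ha : 0 < a) (hab : a < b)
    (hb : d2 δ < b) (haa : a ≤ d1 δ)
    (hπ : π = δ * Equiv.swap a b) (hlen : len π = len δ + 1) :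
    (∀ i ∈ descents π, i ≤ d2 δ) ∧ d2 π ≤ d2 δ := by
  subst hπ
  have hbdd := bddAbove_descents
    (inversions_finite_of_mul_swap hab (inversions_finite_of_len_eq_succ hlen))
  have hnonempty : (descents δ).Nonempty := by
    by_contra hempty
    rw [Set.not_nonempty_iff_eq_empty] at hempty
    rw [d1, hempty, Nat.sInf_empty] at haa
    omega
  have had2 : a ≤ d2 δ := haa.trans (csInf_le_csSup hnonempty (OrderBot.bddBelow _) hbdd)
  have hle := le_d2_of_mem_descents_mul_swap hbdd had2 hb (lt_of_len_mul_swap_eq_succ hab hlen)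
    fun c hac hcb => not_between_of_len_mul_swap_eq_succ hac hcb hlen
  exact ⟨hle, csSup_le' hle⟩

theorem stmt12 (δ : Equiv.Perm ℕ) (hδ : FinPerm δ) (hne : δ ≠ 1)
    (π : Equiv.Perm ℕ) (a b : ℕ) (ha : 0 < a) (hab : a < b)
    (hb : d2 δ < b) (haa : a ≤ d1 δ)
    (hπ : π = δ * Equiv.swap a b) (hlen : len π = len δ + 1) :
    (∀ i ∈ descents π, i ≤ d2 δ) ∧ d2 π ≤ d2 δ :=
  stmt12_general δ π a b ha hab hb haa hπ hlen
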